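/- arXiv:1703.04841 — 2 statements merged into one kernel-verified Lean document; each statement's English description precedes it below -/
import Mathlib

section
/- There exists a constant C > 0, depending only on the degree bound, such that for every polynomial p with complex coefficients and degree at most k, | ∫_{-∞}^{∞} (e^{−x²/2}/√(2π)) log|p(x)| dx − log M(p) | ≤ C·k, where M(p) is the Mahler measure of p. -/
open MeasureTheory

/-- The Mahler measure of a complex polynomial `p = a (x - z₁) ⋯ (x - z_k)`:
`M(p) = |a| ∏_{|z_i| > 1} |z_i|`. -/
noncomputable def mahlerMeas (p : Polynomial ℂ) : ℝ :=
  ‖p.leadingCoeff‖ * ((p.roots.map (fun z => max 1 ‖z‖)).prod)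

/-!
Factor `p = a ∏ (X - z)`. Then `∫ log |p| dμ - log M(p) = ∑_z (∫ log |x - z| dμ - log⁺ |z|)`,
so it suffices to bound each summand uniformly in the root `z`. Pointwise,
`|log |x - z| - log⁺ |z|| ≤ log 2 + log⁺ |x| + log⁺ |x - Re z|⁻¹`, using `|x - z| ≥ |x - Re z|`
for the singular term. For a probability measure `μ ≤ c • volume` with finite logarithmic moment,
integrating gives the bound `log 2 + ∫ log⁺ |x| dμ + c ∫ log⁺ |u|⁻¹ du`, independent of `z`.
The standard Gaussian has density at most `1` and a finite first moment.
-/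

open ProbabilityTheory Polynomial Real
open scoped NNReal ENNReal

section MultisetIntegral

variable {α ι G : Type*} [MeasurableSpace α] {μ : Measure α}
  [NormedAddCommGroup G] {s : Multiset ι} {f : ι → α → G}

theorem MeasureTheory.integrable_multisetSum_map (hf : ∀ i ∈ s, Integrable (f i) μ) :
    Integrable (fun a => (s.map fun i => f i a).sum) μ := by
  induction s using Multiset.induction_on with
  | empty => simp
  | cons i s ih =>
    simp only [Multiset.map_cons, Multiset.sum_cons]
    exact (hf i (s.mem_cons_self i)).add (ih fun j hj => hf j (Multiset.mem_cons_of_mem hj))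

theorem MeasureTheory.integral_multisetSum_map [NormedSpace ℝ G]
    (hf : ∀ i ∈ s, Integrable (f i) μ) :
    ∫ a, (s.map fun i => f i a).sum ∂μ = (s.map fun i => ∫ a, f i a ∂μ).sum := by
  induction s using Multiset.induction_on with
  | empty => simp
  | cons i s ih =>
    have hs : ∀ j ∈ s, Integrable (f j) μ := fun j hj => hf j (Multiset.mem_cons_of_mem hj)
    simp only [Multiset.map_cons, Multiset.sum_cons]
    rw [integral_add (hf i (s.mem_cons_self i)) (integrable_multisetSum_map hs), ih hs]

end MultisetIntegral

theorem Real.integrable_posLog_inv : Integrable (fun u : ℝ => log⁺ u⁻¹) := by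
  refine IntegrableOn.integrable_of_forall_notMem_eq_zero (s := Set.Icc (-1) 1) ?_ fun u hu => ?_
  · have hlog : IntegrableOn (fun u => -log u) (Set.Icc (-1 : ℝ) 1) :=
      (intervalIntegrable_iff_integrableOn_Icc_of_le (by norm_num)).1
        intervalIntegral.intervalIntegrable_log'.neg
    refine hlog.congr_fun (fun u hu => ?_) measurableSet_Icc
    show -log u = log⁺ u⁻¹
    have hle : log |u| ≤ 0 := log_nonpos (abs_nonneg u) (abs_le.2 hu)
    rw [posLog_apply, log_inv, ← log_abs, max_eq_right (neg_nonneg.2 hle)]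
  · rw [Set.mem_Icc, ← abs_le, not_le] at hu
    rw [posLog_eq_zero_iff, abs_inv]
    exact inv_le_one_of_one_le₀ hu.le

theorem log_norm_ofReal_sub_le (x : ℝ) (z : ℂ) :
    log ‖(x : ℂ) - z‖ ≤ log 2 + log⁺ x + log⁺ ‖z‖ :=
  calc log ‖(x : ℂ) - z‖ ≤ log⁺ ‖(x : ℂ) + -z‖ := by
        rw [← sub_eq_add_neg]; exact le_max_right _ _
    _ ≤ log⁺ ‖(x : ℂ)‖ + log⁺ ‖-z‖ + log 2 := posLog_norm_add_le _ _
    _ = log 2 + log⁺ x + log⁺ ‖z‖ := by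
      rw [norm_neg, Complex.norm_real, norm_eq_abs, posLog_abs]; ring

theorem posLog_norm_le_log_norm_ofReal_sub (z : ℂ) {x : ℝ} (hx : x ≠ z.re) :
    log⁺ ‖z‖ ≤ log 2 + log⁺ x + log ‖(x : ℂ) - z‖ + log⁺ (x - z.re)⁻¹ := by
  have hre : |x - z.re| ≤ ‖(x : ℂ) - z‖ := by simpa using Complex.abs_re_le_norm ((x : ℂ) - z)
  have hinv : log⁺ ‖(x : ℂ) - z‖⁻¹ ≤ log⁺ (x - z.re)⁻¹ := by
    rw [← posLog_abs (x - z.re)⁻¹, abs_inv]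
    exact posLog_le_posLog (by positivity) (inv_anti₀ (abs_pos.2 (sub_ne_zero.2 hx)) hre)
  calc log⁺ ‖z‖ = log⁺ ‖(x : ℂ) + -((x : ℂ) - z)‖ := by ring_nf
    _ ≤ log⁺ ‖(x : ℂ)‖ + log⁺ ‖-((x : ℂ) - z)‖ + log 2 := posLog_norm_add_le _ _
    _ = log 2 + log⁺ x + log⁺ ‖(x : ℂ) - z‖ := by
      rw [norm_neg, Complex.norm_real, norm_eq_abs, posLog_abs]; ring
    _ ≤ _ := by linarith [posLog_sub_posLog_inv (x := ‖(x : ℂ) - z‖)]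

theorem abs_log_norm_ofReal_sub_sub_posLog_le (z : ℂ) {x : ℝ} (hx : x ≠ z.re) :
    |log ‖(x : ℂ) - z‖ - log⁺ ‖z‖| ≤ log 2 + log⁺ x + log⁺ (x - z.re)⁻¹ := by
  have hupper := log_norm_ofReal_sub_le x z
  have hlower := posLog_norm_le_log_norm_ofReal_sub z hx
  have hz : 0 ≤ log⁺ ‖z‖ := posLog_nonneg
  have hsing : 0 ≤ log⁺ (x - z.re)⁻¹ := posLog_nonneg
  rw [abs_le]; constructor <;> linarith

theorem Polynomial.log_norm_eval_eq_log_norm_leadingCoeff_add_sum_roots {p : ℂ[X]} {w : ℂ}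
    (hw : p.eval w ≠ 0) :
    log ‖p.eval w‖ = log ‖p.leadingCoeff‖ + (p.roots.map fun z => log ‖w - z‖).sum := by
  have hp : p ≠ 0 := by rintro rfl; simp at hw
  have hfactor : ∀ r ∈ p.roots.map fun z => ‖w - z‖, r ≠ 0 := by
    simp only [Multiset.mem_map, mem_roots hp]
    rintro _ ⟨z, hz, rfl⟩ h
    rw [norm_eq_zero, sub_eq_zero] at h
    exact hw (h ▸ hz)
  have hnorm (m : Multiset ℂ) : ‖m.prod‖ = (m.map (‖·‖)).prod :=
    map_multiset_prod (normHom : ℂ →*₀ ℝ) m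
  conv_lhs => rw [(IsAlgClosed.splits p).eq_prod_roots]
  simp only [eval_mul, eval_C, eval_multiset_prod, norm_mul, hnorm, Multiset.map_map,
    Function.comp_def, eval_sub, eval_X]
  rw [log_mul (by simpa using hp) (Multiset.prod_ne_zero fun h => hfactor 0 h rfl),
    log_multiset_prod hfactor, Multiset.map_map]
  rfl

section BoundedDensity

variable {μ : Measure ℝ} {c : ℝ≥0}

theorem ae_notMem_of_le_smul_volume (hμ : μ ≤ (c : ℝ≥0∞) • volume) {s : Set ℝ}
    (hs : s.Finite) : ∀ᵐ x ∂μ, x ∉ s :=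
  (Measure.absolutelyContinuous_of_le_smul hμ).ae_le
    (measure_eq_zero_iff_ae_notMem.1 (hs.measure_zero _))

theorem integrable_posLog_inv_sub_of_le_smul_volume (hμ : μ ≤ (c : ℝ≥0∞) • volume) (t : ℝ) :
    Integrable (fun x => log⁺ (x - t)⁻¹) μ :=
  ((integrable_posLog_inv.comp_sub_right t).smul_measure ENNReal.coe_ne_top).mono_measure hμ

theorem integral_posLog_inv_sub_le_of_le_smul_volume (hμ : μ ≤ (c : ℝ≥0∞) • volume) (t : ℝ) :
    ∫ x, log⁺ (x - t)⁻¹ ∂μ ≤ c * ∫ u, log⁺ u⁻¹ :=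
  calc ∫ x, log⁺ (x - t)⁻¹ ∂μ ≤ ∫ x, log⁺ (x - t)⁻¹ ∂((c : ℝ≥0∞) • volume) :=
        integral_mono_measure hμ (ae_of_all _ fun _ => posLog_nonneg)
          ((integrable_posLog_inv.comp_sub_right t).smul_measure ENNReal.coe_ne_top)
    _ = c * ∫ u, log⁺ u⁻¹ := by
        rw [integral_smul_measure, integral_sub_right_eq_self (fun u => log⁺ u⁻¹)]; rfl

noncomputable def rootLogDeviationBound (μ : Measure ℝ) (c : ℝ≥0) : ℝ :=
  log 2 + ∫ x, log⁺ x ∂μ + c * ∫ u, log⁺ u⁻¹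

theorem rootLogDeviationBound_pos (μ : Measure ℝ) (c : ℝ≥0) : 0 < rootLogDeviationBound μ c := by
  have h₁ : 0 ≤ ∫ x, log⁺ x ∂μ := integral_nonneg fun _ => posLog_nonneg
  have h₂ : 0 ≤ ∫ u, log⁺ u⁻¹ := integral_nonneg fun _ => posLog_nonneg
  unfold rootLogDeviationBound
  have := log_pos one_lt_two
  positivity

variable [IsProbabilityMeasure μ] (hμ : μ ≤ (c : ℝ≥0∞) • volume)
  (hlog : Integrable (fun x => log⁺ x) μ)
include hμ hlog

theorem integrable_log_norm_ofReal_sub (z : ℂ) :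
    Integrable (fun x : ℝ => log ‖(x : ℂ) - z‖) μ := by
  have hdev : Integrable (fun x : ℝ => log ‖(x : ℂ) - z‖ + -log⁺ ‖z‖) μ := by
    refine Integrable.mono' (((integrable_const (log 2)).add hlog).add
      (integrable_posLog_inv_sub_of_le_smul_volume hμ z.re))
      (Measurable.aestronglyMeasurable (by fun_prop)) ?_
    filter_upwards [ae_notMem_of_le_smul_volume hμ (Set.finite_singleton z.re)] with x hx
    simpa [← sub_eq_add_neg] using abs_log_norm_ofReal_sub_sub_posLog_le z hx
  exact integrable_add_const_iff.1 hdev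

theorem abs_integral_log_norm_ofReal_sub_sub_posLog_le (z : ℂ) :
    |∫ x : ℝ, log ‖(x : ℂ) - z‖ ∂μ - log⁺ ‖z‖| ≤ rootLogDeviationBound μ c := by
  have hre := integrable_posLog_inv_sub_of_le_smul_volume hμ z.re
  have hlog₂ : Integrable (fun x => log 2 + log⁺ x) μ := (integrable_const _).add hlog
  calc |∫ x : ℝ, log ‖(x : ℂ) - z‖ ∂μ - log⁺ ‖z‖|
      = ‖∫ x : ℝ, (log ‖(x : ℂ) - z‖ - log⁺ ‖z‖) ∂μ‖ := by
        rw [integral_sub (integrable_log_norm_ofReal_sub hμ hlog z) (integrable_const _),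
          integral_const, probReal_univ, one_smul, norm_eq_abs]
    _ ≤ ∫ x, (log 2 + log⁺ x + log⁺ (x - z.re)⁻¹) ∂μ := by
        refine norm_integral_le_of_norm_le (hlog₂.add hre) ?_
        filter_upwards [ae_notMem_of_le_smul_volume hμ (Set.finite_singleton z.re)] with x hx
        exact abs_log_norm_ofReal_sub_sub_posLog_le z hx
    _ = log 2 + ∫ x, log⁺ x ∂μ + ∫ x, log⁺ (x - z.re)⁻¹ ∂μ := by
        rw [integral_add hlog₂ hre, integral_add (integrable_const _) hlog,
          integral_const, probReal_univ, one_smul]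
    _ ≤ rootLogDeviationBound μ c := by
        have := integral_posLog_inv_sub_le_of_le_smul_volume hμ z.re
        unfold rootLogDeviationBound
        linarith

theorem integral_log_norm_eval_sub_logMahlerMeasure {p : ℂ[X]} (hp : p ≠ 0) :
    ∫ x : ℝ, log ‖p.eval (x : ℂ)‖ ∂μ - p.logMahlerMeasure =
      (p.roots.map fun z => ∫ x : ℝ, log ‖(x : ℂ) - z‖ ∂μ - log⁺ ‖z‖).sum := by
  have hroots : {x : ℝ | p.eval (x : ℂ) = 0}.Finite :=
    (finite_setOfPred_isRoot hp).preimage Complex.ofReal_injective.injOn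
  have hfactor : ∀ᵐ x : ℝ ∂μ, log ‖p.eval (x : ℂ)‖ =
      log ‖p.leadingCoeff‖ + (p.roots.map fun z => log ‖(x : ℂ) - z‖).sum := by
    filter_upwards [ae_notMem_of_le_smul_volume hμ hroots] with x hx
    exact log_norm_eval_eq_log_norm_leadingCoeff_add_sum_roots hx
  have hint : ∀ z ∈ p.roots, Integrable (fun x : ℝ => log ‖(x : ℂ) - z‖) μ :=
    fun z _ => integrable_log_norm_ofReal_sub hμ hlog z
  rw [integral_congr_ae hfactor,
    integral_add (integrable_const _) (integrable_multisetSum_map hint),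
    integral_multisetSum_map hint, integral_const, probReal_univ, one_smul,
    logMahlerMeasure_eq_log_leadingCoeff_add_sum_log_roots, Multiset.sum_map_sub]
  ring

theorem abs_integral_log_norm_eval_sub_logMahlerMeasure_le {p : ℂ[X]} (hp : p ≠ 0) :
    |∫ x : ℝ, log ‖p.eval (x : ℂ)‖ ∂μ - p.logMahlerMeasure| ≤
      rootLogDeviationBound μ c * p.natDegree := by
  rw [integral_log_norm_eval_sub_logMahlerMeasure hμ hlog hp]
  calc _ ≤ (p.roots.map fun z => |∫ x : ℝ, log ‖(x : ℂ) - z‖ ∂μ - log⁺ ‖z‖|).sum :=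
        Multiset.abs_sum_le_sum_abs.trans_eq (by rw [Multiset.map_map]; rfl)
    _ ≤ Multiset.card (p.roots.map _) • rootLogDeviationBound μ c :=
        Multiset.sum_le_card_nsmul _ _ (Multiset.forall_mem_map_iff.2 fun z _ =>
          abs_integral_log_norm_ofReal_sub_sub_posLog_le hμ hlog z)
    _ ≤ rootLogDeviationBound μ c * p.natDegree := by
        rw [Multiset.card_map, nsmul_eq_mul, mul_comm]
        gcongr
        · exact (rootLogDeviationBound_pos μ c).le
        · exact_mod_cast card_roots' p

end BoundedDensity

theorem gaussianPDFReal_le_one (m : ℝ) (x : ℝ) : gaussianPDFReal m 1 x ≤ 1 := by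
  have h2π : 1 ≤ √(2 * π) := one_le_sqrt.2 (by nlinarith [pi_gt_three])
  have hexp : rexp (-(x - m) ^ 2 / 2) ≤ 1 := exp_le_one_iff.2 (by nlinarith [sq_nonneg (x - m)])
  simp only [gaussianPDFReal, NNReal.coe_one, mul_one]
  exact mul_le_one₀ (inv_le_one_of_one_le₀ h2π) (exp_nonneg _) hexp

theorem gaussianReal_le_volume (m : ℝ) : gaussianReal m 1 ≤ volume := by
  rw [gaussianReal_of_var_ne_zero _ one_ne_zero]
  calc volume.withDensity (gaussianPDF m 1) ≤ volume.withDensity 1 :=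
        withDensity_mono (ae_of_all _ fun x =>
          ENNReal.ofReal_le_one.2 (gaussianPDFReal_le_one m x))
    _ = volume := withDensity_one

theorem integrable_posLog_gaussianReal (m : ℝ) (v : ℝ≥0) :
    Integrable (fun x => log⁺ x) (gaussianReal m v) := by
  refine ((memLp_id_gaussianReal 1).integrable le_rfl).abs.mono' (by fun_prop)
    (ae_of_all _ fun x => ?_)
  rw [norm_of_nonneg posLog_nonneg, id_eq, ← posLog_abs, posLog_apply]
  exact max_le (abs_nonneg x) (log_le_self (abs_nonneg x))

theorem integral_gaussianReal_zero_one (f : ℝ → ℝ) :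
    ∫ x, f x ∂gaussianReal 0 1 = ∫ x, rexp (-x ^ 2 / 2) / √(2 * π) * f x := by
  rw [integral_gaussianReal_eq_integral_smul one_ne_zero]
  congr with x
  simp [gaussianPDFReal, div_eq_inv_mul]

theorem mahlerMeas_eq_mahlerMeasure (p : ℂ[X]) : mahlerMeas p = p.mahlerMeasure :=
  (mahlerMeasure_eq_leadingCoeff_mul_prod_roots p).symm

theorem stmt9 :
    ∃ C : ℝ, 0 < C ∧ ∀ (k : ℕ) (p : Polynomial ℂ), p ≠ 0 → p.natDegree ≤ k →
      |(∫ x : ℝ, (Real.exp (-x ^ 2 / 2) / Real.sqrt (2 * Real.pi)) *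
          Real.log ‖p.eval (x : ℂ)‖) -
        Real.log (mahlerMeas p)| ≤ C * k := by
  have hγ : gaussianReal 0 1 ≤ ((1 : ℝ≥0) : ℝ≥0∞) • volume := by
    simpa using gaussianReal_le_volume 0
  refine ⟨rootLogDeviationBound (gaussianReal 0 1) 1, rootLogDeviationBound_pos _ _,
    fun k p hp hk => ?_⟩
  rw [← integral_gaussianReal_zero_one, mahlerMeas_eq_mahlerMeasure,
    ← logMahlerMeasure_eq_log_MahlerMeasure]
  calc _ ≤ rootLogDeviationBound (gaussianReal 0 1) 1 * p.natDegree :=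
        abs_integral_log_norm_eval_sub_logMahlerMeasure_le hγ
          (integrable_posLog_gaussianReal 0 1) hp
    _ ≤ rootLogDeviationBound (gaussianReal 0 1) 1 * k := by
        gcongr
        exact (rootLogDeviationBound_pos _ _).le
end

section
/- There exists a constant C > 0 such that for every Λ > 2 and every a ∈ ℂ, E(log⁻|1 − aN| | N ≥ Λ) ≥ −C log Λ, where N is a standard normal random variable and log⁻ t = min(log t, 0). -/
/-!
With `t = ‖a‖⁻¹`, the reverse triangle inequality gives `‖1 - a x‖ ≥ |1 - ‖a‖ x| = ‖a‖ |x - t|`.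
If `t > 2x` this is at least `1/2`; otherwise `‖a‖ ≥ 1/(2x)`, so for `x > Λ`
`log⁻ ‖1 - a x‖ ≥ log⁻ (Λ (x - t)) - log (2 Λ x)`.
The logarithmic singularity is integrable, `∫ log⁻ |Λ (x - t)| dx = -2/Λ`, and the conditional
density of `N` given `N ≥ Λ` is at most `8Λ`, so it contributes `O(1)`. The term `log (2 Λ x)` is
at most `log 2 + 2 log Λ + x/Λ - 1`, and `E[N | N ≥ Λ] ≤ 8Λ`, so it contributes `O(log Λ)`.
-/

open MeasureTheory Set Real Filter Topology

lemma integral_mono_of_nonpos {α : Type*} [MeasurableSpace α] {μ : Measure α} {f g : α → ℝ}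
    (hf : Integrable f μ) (hg : g ≤ᵐ[μ] 0) (hfg : f ≤ᵐ[μ] g) : ∫ x, f x ∂μ ≤ ∫ x, g x ∂μ := by
  have := integral_mono_of_nonneg (f := -g) (g := -f)
    (hg.mono fun x hx => by simpa using hx) hf.neg (hfg.mono fun x hx => by simpa using hx)
  simpa [integral_neg] using this

lemma mul_integral_le_setIntegral_mul {α : Type*} [MeasurableSpace α] {μ : Measure α}
    {f g : α → ℝ} {s : Set α} {M : ℝ} (hs : MeasurableSet s) (hg : Integrable g μ)
    (hg0 : ∀ x, g x ≤ 0) (hf : AEStronglyMeasurable f (μ.restrict s)) (hf0 : ∀ x ∈ s, 0 ≤ f x)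
    (hfM : ∀ x ∈ s, f x ≤ M) (hM : 0 ≤ M) :
    M * ∫ x, g x ∂μ ≤ ∫ x in s, g x * f x ∂μ := by
  have hgs : ∫ x, g x ∂μ ≤ ∫ x in s, g x ∂μ := by
    rw [← integral_add_compl hs hg]
    linarith [integral_nonpos (μ := μ.restrict sᶜ) hg0]
  have hgf : Integrable (fun x => g x * f x) (μ.restrict s) :=
    hg.integrableOn.mul_bdd hf ((ae_restrict_mem hs).mono fun x hx => by
      rw [norm_of_nonneg (hf0 x hx)]; exact hfM x hx)
  calc M * ∫ x, g x ∂μ ≤ ∫ x in s, M * g x ∂μ := by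
        rw [integral_const_mul]; exact mul_le_mul_of_nonneg_left hgs hM
    _ ≤ ∫ x in s, g x * f x ∂μ :=
        setIntegral_mono_on (hg.integrableOn.const_mul M) hgf hs fun x hx => by
          nlinarith [hg0 x, hf0 x hx, hfM x hx]

lemma min_log_zero_eq_indicator (s : ℝ) : min (log s) 0 = (Icc (-1) 1).indicator log s := by
  rw [← log_abs]
  by_cases hs : |s| ≤ 1
  · rw [indicator_of_mem (show s ∈ Icc (-1) 1 from abs_le.1 hs), log_abs,
      min_eq_left (by simpa using log_nonpos (abs_nonneg s) hs)]
  · rw [indicator_of_notMem (show s ∉ Icc (-1) 1 from fun h => hs (abs_le.2 h)),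
      min_eq_right (log_pos (not_le.1 hs)).le]

lemma integrable_min_log_zero : Integrable fun s : ℝ => min (log s) 0 := by
  simp_rw [min_log_zero_eq_indicator]
  rw [integrable_indicator_iff measurableSet_Icc]
  exact (intervalIntegrable_iff_integrableOn_Icc_of_le (by norm_num)).1
    intervalIntegral.intervalIntegrable_log'

lemma integral_min_log_zero : ∫ s : ℝ, min (log s) 0 = -2 := by
  simp_rw [min_log_zero_eq_indicator]
  rw [integral_indicator measurableSet_Icc, integral_Icc_eq_integral_Ioc,
    ← intervalIntegral.integral_of_le (by norm_num), integral_log]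
  norm_num

lemma integrable_min_log_mul_sub_zero {c : ℝ} (hc : 0 < c) (t : ℝ) :
    Integrable fun x : ℝ => min (log (c * (x - t))) 0 :=
  (integrable_min_log_zero.comp_mul_left' hc.ne').comp_sub_right t

lemma integral_min_log_mul_sub_zero {c : ℝ} (hc : 0 < c) (t : ℝ) :
    ∫ x : ℝ, min (log (c * (x - t))) 0 = -2 / c := by
  rw [integral_sub_right_eq_self (fun x => min (log (c * x)) 0) t,
    Measure.integral_comp_mul_left (fun x => min (log x) 0), integral_min_log_zero,
    abs_of_pos (inv_pos.2 hc), smul_eq_mul]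
  ring

lemma integrable_exp_neg_sq_div_two : Integrable fun x : ℝ => exp (-x ^ 2 / 2) := by
  convert integrable_exp_neg_mul_sq (b := 1 / 2) one_half_pos using 3
  ring

lemma integrable_mul_exp_neg_sq_div_two : Integrable fun x : ℝ => x * exp (-x ^ 2 / 2) := by
  convert integrable_mul_exp_neg_mul_sq (b := 1 / 2) one_half_pos using 4
  ring

lemma integrable_min_log_mul_sub_mul_exp {c : ℝ} (hc : 0 < c) (t : ℝ) :
    Integrable fun x => min (log (c * (x - t))) 0 * exp (-x ^ 2 / 2) :=
  (integrable_min_log_mul_sub_zero hc t).mul_bdd (c := 1) (by fun_prop)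
    (Eventually.of_forall fun x => by
      rw [norm_of_nonneg (exp_pos _).le, exp_le_one_iff]; nlinarith [sq_nonneg x])

lemma integral_Ioi_mul_exp_neg_sq_div_two (Λ : ℝ) :
    ∫ x in Ioi Λ, x * exp (-x ^ 2 / 2) = exp (-Λ ^ 2 / 2) := by
  have hderiv (x : ℝ) : HasDerivAt (fun x => -exp (-x ^ 2 / 2)) (x * exp (-x ^ 2 / 2)) x := by
    refine ((hasDerivAt_pow 2 x).neg.div_const 2).exp.neg.congr_deriv ?_
    simp only [Pi.neg_apply]
    ring
  have hlim : Tendsto (fun x : ℝ => -exp (-x ^ 2 / 2)) atTop (𝓝 0) := by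
    have : Tendsto (fun x : ℝ => -x ^ 2 / 2) atTop atBot := by
      simp_rw [neg_div]
      exact tendsto_neg_atTop_atBot.comp
        ((tendsto_pow_atTop two_ne_zero).atTop_div_const two_pos)
    simpa using (tendsto_exp_atBot.comp this).neg
  rw [integral_Ioi_of_hasDerivAt_of_tendsto' (fun x _ => hderiv x)
    integrable_mul_exp_neg_sq_div_two.integrableOn hlim]
  ring

lemma exp_neg_sq_div_two_le_integral_Ioi {Λ : ℝ} (hΛ : 1 ≤ Λ) :
    exp (-Λ ^ 2 / 2) ≤ 8 * Λ * ∫ x in Ioi Λ, exp (-x ^ 2 / 2) := by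
  have hΛ0 : 0 < Λ := by linarith
  have hinv : Λ * Λ⁻¹ = 1 := mul_inv_cancel₀ hΛ0.ne'
  have hinv_le : Λ⁻¹ ≤ 1 := inv_le_one_of_one_le₀ hΛ
  have hbox : ∀ x ∈ Ioo Λ (Λ + Λ⁻¹), exp (-Λ ^ 2 / 2) * exp (-2) ≤ exp (-x ^ 2 / 2) := by
    intro x ⟨hx₁, hx₂⟩
    rw [← exp_add, exp_le_exp]
    nlinarith [inv_pos.2 hΛ0]
  have hboxint := setIntegral_ge_of_const_le_real measurableSet_Ioo measure_Ioo_lt_top.ne hbox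
    integrable_exp_neg_sq_div_two.integrableOn
  rw [volume_real_Ioo_of_le (by linarith [inv_pos.2 hΛ0]), add_sub_cancel_left] at hboxint
  have hmono : ∫ x in Ioo Λ (Λ + Λ⁻¹), exp (-x ^ 2 / 2) ≤ ∫ x in Ioi Λ, exp (-x ^ 2 / 2) :=
    setIntegral_mono_set integrable_exp_neg_sq_div_two.integrableOn
      (Eventually.of_forall fun x => (exp_pos _).le) Ioo_subset_Ioi_self.eventuallyLE
  have hexp : exp 2 ≤ 8 := by
    have : exp 2 = exp 1 ^ 2 := by rw [← exp_nat_mul]; norm_num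
    nlinarith [exp_one_lt_d9, exp_pos 1]
  calc exp (-Λ ^ 2 / 2) = exp 2 * Λ * (exp (-Λ ^ 2 / 2) * exp (-2) * Λ⁻¹) := by
        have : exp 2 * exp (-2) = 1 := by rw [← exp_add]; norm_num
        linear_combination (-exp (-Λ ^ 2 / 2)) * this - exp (-Λ ^ 2 / 2) * exp 2 * exp (-2) * hinv
    _ ≤ 8 * Λ * ∫ x in Ioi Λ, exp (-x ^ 2 / 2) := by gcongr; linarith

lemma abs_one_sub_norm_mul_le_norm_one_sub_mul (a : ℂ) {x : ℝ} (hx : 0 ≤ x) :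
    |1 - ‖a‖ * x| ≤ ‖1 - a * x‖ := by
  simpa [norm_mul, Complex.norm_real, abs_of_nonneg hx] using abs_norm_sub_norm_le (1 : ℂ) (a * x)

lemma min_log_mul_sub_inv_sub_log_le {r c x B : ℝ} (hc : 0 < c) (hcx : 1 ≤ c * x)
    (hxr : x ≠ r⁻¹) (hB : |1 - r * x| ≤ B) :
    min (log (c * (x - r⁻¹))) 0 - log (2 * c * x) ≤ min (log B) 0 := by
  have hx : 0 < x := pos_of_mul_pos_right (by linarith) hc.le
  have hlog : log 2 ≤ log (2 * c * x) := log_le_log two_pos (by linarith)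
  have hℓ : min (log (c * (x - r⁻¹))) 0 ≤ 0 := min_le_right _ _
  have hA : 0 < |1 - r * x| :=
    abs_pos.2 fun h => hxr (eq_inv_of_mul_eq_one_right (by linarith))
  refine le_min (le_trans ?_ (log_le_log hA hB)) (by linarith [log_pos one_lt_two])
  rcases lt_or_ge (2 * r * x) 1 with hsmall | hlarge
  · have : log (1 / 2) ≤ log |1 - r * x| :=
      log_le_log (by norm_num) (by rw [abs_of_pos (by linarith)]; linarith)
    rw [one_div, log_inv] at this
    linarith
  · have hr0 : 0 < r := pos_of_mul_pos_left (by nlinarith) hx.le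
    have hfactor : |1 - r * x| = r * |x - r⁻¹| := by
      rw [← abs_of_pos hr0, ← abs_mul, abs_of_pos hr0, abs_sub_comm, mul_sub,
        mul_inv_cancel₀ hr0.ne']
    have hdist : 0 < |x - r⁻¹| := by
      rw [hfactor] at hA; exact pos_of_mul_pos_right hA hr0.le
    have hquot : c * |x - r⁻¹| / (2 * c * x) ≤ |1 - r * x| := by
      rw [hfactor, div_le_iff₀ (by positivity)]
      nlinarith [mul_nonneg (sub_nonneg.2 hlarge) (mul_pos hc hdist).le]
    have := log_le_log (by positivity) hquot
    rw [log_div (by positivity) (by positivity)] at this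
    have habs : log (c * |x - r⁻¹|) = log (c * (x - r⁻¹)) := by
      rw [← log_abs (c * (x - r⁻¹)), abs_mul, abs_of_pos hc]
    linarith [min_le_left (log (c * (x - r⁻¹))) 0]

lemma log_two_mul_mul_le {Λ x : ℝ} (hΛ : 0 < Λ) (hx : 0 < x) :
    log (2 * Λ * x) ≤ log 2 + 2 * log Λ - 1 + x / Λ := by
  have := log_le_sub_one_of_pos (div_pos hx hΛ)
  rw [log_div hx.ne' hΛ.ne'] at this
  rw [log_mul (by positivity) hx.ne', log_mul two_ne_zero hΛ.ne']
  linarith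

lemma neg_mul_log_mul_integral_Ioi_le {Λ : ℝ} (hΛ : 2 < Λ) (t : ℝ) :
    -(40 * log Λ) * ∫ x in Ioi Λ, exp (-x ^ 2 / 2) ≤
      ∫ x in Ioi Λ, min (log (Λ * (x - t))) 0 * exp (-x ^ 2 / 2)
        - (log 2 + 2 * log Λ - 1) * exp (-x ^ 2 / 2) - Λ⁻¹ * (x * exp (-x ^ 2 / 2)) := by
  have hΛ0 : 0 < Λ := by linarith
  set D := ∫ x in Ioi Λ, exp (-x ^ 2 / 2)
  have hsingular : exp (-Λ ^ 2 / 2) * (-2 / Λ) ≤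
      ∫ x in Ioi Λ, min (log (Λ * (x - t))) 0 * exp (-x ^ 2 / 2) := by
    rw [← integral_min_log_mul_sub_zero hΛ0 t]
    refine mul_integral_le_setIntegral_mul measurableSet_Ioi
      (integrable_min_log_mul_sub_zero hΛ0 t) (fun x => min_le_right _ _)
      (by fun_prop) (fun x _ => (exp_pos _).le) (fun x hx => ?_) (exp_pos _).le
    rw [exp_le_exp]
    nlinarith [mem_Ioi.1 hx]
  have hfirst : Integrable fun x => min (log (Λ * (x - t))) 0 * exp (-x ^ 2 / 2)
      - (log 2 + 2 * log Λ - 1) * exp (-x ^ 2 / 2) :=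
    (integrable_min_log_mul_sub_mul_exp hΛ0 t).sub (integrable_exp_neg_sq_div_two.const_mul _)
  rw [integral_sub hfirst.integrableOn
      (integrable_mul_exp_neg_sq_div_two.const_mul _).integrableOn,
    integral_sub (integrable_min_log_mul_sub_mul_exp hΛ0 t).integrableOn
      (integrable_exp_neg_sq_div_two.const_mul _).integrableOn,
    integral_const_mul, integral_const_mul, integral_Ioi_mul_exp_neg_sq_div_two]
  have htail := exp_neg_sq_div_two_le_integral_Ioi (by linarith : 1 ≤ Λ)
  have hlog2 : log 2 ≤ log Λ := log_le_log two_pos hΛ.le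
  have hD : 0 ≤ D := setIntegral_nonneg measurableSet_Ioi fun x _ => (exp_pos _).le
  have hrem : 3 * exp (-Λ ^ 2 / 2) / Λ ≤ 24 * D := by
    rw [div_le_iff₀ hΛ0]; linarith
  -- `40` absorbs `log 2 + 2 log Λ + 23` because `log Λ > log 2 > 0.69`.
  have hconst : 0 ≤ (38 * log Λ - 23 - log 2) * D :=
    mul_nonneg (by linarith [log_two_gt_d9]) hD
  have : exp (-Λ ^ 2 / 2) * (-2 / Λ) - Λ⁻¹ * exp (-Λ ^ 2 / 2) = -(3 * exp (-Λ ^ 2 / 2) / Λ) := by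
    ring
  linarith

theorem stmt12 :
    ∃ C : ℝ, 0 < C ∧ ∀ Λ : ℝ, 2 < Λ → ∀ a : ℂ,
      (∫ x in Set.Ioi Λ, min (Real.log ‖1 - a * (x : ℂ)‖) 0 *
          Real.exp (-x ^ 2 / 2)) /
          (∫ x in Set.Ioi Λ, Real.exp (-x ^ 2 / 2)) ≥ -(C * Real.log Λ) := by
  refine ⟨40, by norm_num, fun Λ hΛ a => ?_⟩
  have hΛ0 : 0 < Λ := by linarith
  have hD : 0 < ∫ x in Ioi Λ, exp (-x ^ 2 / 2) := pos_of_mul_pos_right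
    ((exp_pos _).trans_le (exp_neg_sq_div_two_le_integral_Ioi (by linarith))) (by positivity)
  rw [ge_iff_le, le_div_iff₀ hD]
  refine (neg_mul_log_mul_integral_Ioi_le hΛ ‖a‖⁻¹).trans (integral_mono_of_nonpos ?_ ?_ ?_)
  · exact (((integrable_min_log_mul_sub_mul_exp hΛ0 _).sub
      (integrable_exp_neg_sq_div_two.const_mul _)).sub
      (integrable_mul_exp_neg_sq_div_two.const_mul _)).integrableOn
  · exact Eventually.of_forall fun x =>
      mul_nonpos_of_nonpos_of_nonneg (min_le_right _ _) (exp_pos _).le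
  · filter_upwards [ae_restrict_mem measurableSet_Ioi,
      ae_restrict_of_ae (Measure.ae_ne volume ‖a‖⁻¹)] with x hx hxa
    have hx0 : 0 < x := hΛ0.trans hx
    have hΛx : 1 ≤ Λ * x := by nlinarith [mem_Ioi.1 hx]
    calc _ = (min (log (Λ * (x - ‖a‖⁻¹))) 0 - (log 2 + 2 * log Λ - 1) - x / Λ) *
          exp (-x ^ 2 / 2) := by ring
      _ ≤ (min (log (Λ * (x - ‖a‖⁻¹))) 0 - log (2 * Λ * x)) * exp (-x ^ 2 / 2) := by
          have := log_two_mul_mul_le hΛ0 hx0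
          exact mul_le_mul_of_nonneg_right (by linarith) (exp_pos _).le
      _ ≤ min (log ‖1 - a * x‖) 0 * exp (-x ^ 2 / 2) := by
          gcongr
          exact min_log_mul_sub_inv_sub_log_le hΛ0 hΛx hxa
            (abs_one_sub_norm_mul_le_norm_one_sub_mul a hx0.le)
end
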